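/- arXiv:2001.11062 — 2 statements merged into one kernel-verified Lean document; each statement's English description precedes it below -/
import Mathlib

section
/- Safety theorem for the safe predictor: For every index i and every point x ∈ X, if x ∈ A_i and ∑_{b ∈ S} w_b(x) > 0, then F(x) ∈ B_i. -/
/-- Safety theorem for the safe predictor: if `x ∈ A i` and the total weight at `x`
is positive, then `F x ∈ B i`. -/
theorem safe_predictor_safety
    {X Y : Type*} [MetricSpace X] [NormedAddCommGroup Y] [NormedSpace ℝ Y]
    {c : ℕ} (A : Fin c → Set X) (B : Fin c → Set Y)
    (hB : ∀ i, Convex ℝ (B i))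
    (ς : Fin c → X → ℝ)
    (hς0 : ∀ i x, 0 ≤ ς i x) (hς1 : ∀ i x, ς i x ≤ 1)
    (hςA : ∀ i x, x ∈ A i → ς i x = 0)
    (S : Finset (Fin c → Bool))
    (G : (Fin c → Bool) → X → Y)
    (hG : ∀ b ∈ S, ∀ i, b i = true → ∀ x, G b x ∈ B i)
    (w : (Fin c → Bool) → X → ℝ)
    (hw : ∀ b x, w b x =
      (∏ i ∈ Finset.univ.filter (fun i => b i = false), ς i x) *
      (∏ i ∈ Finset.univ.filter (fun i => b i = true), (1 - ς i x)))
    (F : X → Y)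
    (hF : ∀ x, F x = (∑ b ∈ S, w b x)⁻¹ • ∑ b ∈ S, w b x • G b x)
    (i : Fin c) (x : X) (hx : x ∈ A i)
    (hpos : 0 < ∑ b ∈ S, w b x) :
    F x ∈ B i := by
  have hwz : ∀ b, b i = false → w b x = 0 := by
    intro b hbi
    rw [hw]
    have : ς i x = 0 := hςA i x hx
    rw [Finset.prod_eq_zero (i := i) (by simp [hbi]) this, zero_mul]
  set T := S.filter (fun b => b i = true) with hT
  have hsum : ∀ f : (Fin c → Bool) → ℝ, (∑ b ∈ S, w b x * f b) = ∑ b ∈ T, w b x * f b := by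
    intro f
    rw [hT, Finset.sum_filter]
    apply Finset.sum_congr rfl
    intro b hb
    by_cases h : b i = true
    · simp [h]
    · simp [h, hwz b (Bool.eq_false_iff.mpr h)]
  have hsumw : (∑ b ∈ S, w b x) = ∑ b ∈ T, w b x := by
    have := hsum (fun _ => 1); simpa using this
  have hsumv : (∑ b ∈ S, w b x • G b x) = ∑ b ∈ T, w b x • G b x := by
    rw [hT, Finset.sum_filter]
    apply Finset.sum_congr rfl
    intro b hb
    by_cases h : b i = true
    · simp [h]
    · simp [h, hwz b (Bool.eq_false_iff.mpr h)]
  have hFx : F x = T.centerMass (fun b => w b x) (fun b => G b x) := by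
    rw [hF, Finset.centerMass, hsumw, hsumv]
  rw [hFx]
  apply (hB i).centerMass_mem
  · intro b hb
    rw [hw]
    exact mul_nonneg (Finset.prod_nonneg fun j _ => hς0 j x)
      (Finset.prod_nonneg fun j _ => by linarith [hς1 j x])
  · rwa [← hsumw]
  · intro b hb
    rw [hT, Finset.mem_filter] at hb
    exact hG b hb.1 i hb.2 x
end

section
/- Simultaneous safety for overlapping constraints: For every point x ∈ X with ∑_{b ∈ S} w_b(x) > 0, the safe predictor satisfies F(x) ∈ ⋂_{i : x ∈ A_i} B_i; that is, F(x) lies in B_i for every index i such that x ∈ A_i. -/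
/-- Simultaneous safety for overlapping constraints: `F x` lies in `B i` for every
index `i` such that `x ∈ A i`. -/
theorem safe_predictor_simultaneous_safety
    {X Y : Type*} [MetricSpace X] [NormedAddCommGroup Y] [NormedSpace ℝ Y]
    {c : ℕ} (A : Fin c → Set X) (B : Fin c → Set Y)
    (hB : ∀ i, Convex ℝ (B i))
    (ς : Fin c → X → ℝ)
    (hς0 : ∀ i x, 0 ≤ ς i x) (hς1 : ∀ i x, ς i x ≤ 1)
    (hςA : ∀ i x, x ∈ A i → ς i x = 0)
    (S : Finset (Fin c → Bool))
    (G : (Fin c → Bool) → X → Y)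
    (hG : ∀ b ∈ S, ∀ i, b i = true → ∀ x, G b x ∈ B i)
    (w : (Fin c → Bool) → X → ℝ)
    (hw : ∀ b x, w b x =
      (∏ i ∈ Finset.univ.filter (fun i => b i = false), ς i x) *
      (∏ i ∈ Finset.univ.filter (fun i => b i = true), (1 - ς i x)))
    (F : X → Y)
    (hF : ∀ x, F x = (∑ b ∈ S, w b x)⁻¹ • ∑ b ∈ S, w b x • G b x)
    (x : X) (hpos : 0 < ∑ b ∈ S, w b x) :
    F x ∈ ⋂ i ∈ {i : Fin c | x ∈ A i}, B i := by
  simp only [Set.mem_iInter, Set.mem_setOf_eq]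
  intro i hxA
  -- restrict to bit-strings with nonzero weight
  set T := S.filter (fun b => w b x ≠ 0) with hT
  have hsub : T ⊆ S := Finset.filter_subset _ _
  have hsumT : ∑ b ∈ T, w b x = ∑ b ∈ S, w b x := by
    refine Finset.sum_filter_of_ne ?_
    intro b _ h; exact h
  have hsumT' : ∑ b ∈ T, w b x • G b x = ∑ b ∈ S, w b x • G b x := by
    refine Finset.sum_filter_of_ne ?_
    intro b _ h hwz
    exact h (by rw [hwz, zero_smul])
  have hsumT'' : ∑ b ∈ T, w b x • G b x = ∑ b ∈ S, w b x • G b x := hsumT'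
  have hposT : 0 < ∑ b ∈ T, w b x := hsumT ▸ hpos
  have hFx : F x = ∑ b ∈ T, ((∑ b ∈ T, w b x)⁻¹ * w b x) • G b x := by
    rw [hF x, ← hsumT, ← hsumT'', Finset.smul_sum]
    simp [smul_smul]
  rw [hFx]
  refine (hB i).sum_mem ?_ ?_ ?_
  · intro b hb
    have hwnn : 0 ≤ w b x := by
      rw [hw]
      exact mul_nonneg (Finset.prod_nonneg fun j _ => hς0 j x)
        (Finset.prod_nonneg fun j _ => by linarith [hς1 j x])
    exact mul_nonneg (inv_nonneg.mpr hposT.le) hwnn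
  · rw [← Finset.mul_sum]
    exact inv_mul_cancel₀ hposT.ne'
  · intro b hb
    rw [hT, Finset.mem_filter] at hb
    obtain ⟨hbS, hbw⟩ := hb
    have hbi : b i = true := by
      by_contra h
      have hbf : b i = false := by simpa using h
      apply hbw
      rw [hw]
      have : (∏ j ∈ Finset.univ.filter (fun j => b j = false), ς j x) = 0 := by
        apply Finset.prod_eq_zero (i := i) (by simp [hbf])
        exact hςA i x hxA
      simp [this]
    exact hG b hbS i hbi x
end
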